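/- For every π ∈ S and every s ≥ 1, the Haar measure of F̃_s^π equals 2^{−s}, and consequently μ(F^π) = 0. In particular (taking all π_s to be the identity) μ(F̃_s) = 2^{−s} and μ(F) = 0. -/

import Mathlib

open Filter Finset Topology MeasureTheory
open scoped Classical

noncomputable section

instance : TopologicalSpace (ZMod 2) := ⊥
instance : DiscreteTopology (ZMod 2) := ⟨rfl⟩

/-- The dyadic (Cantor) group `𝔾`: sequences of elements of `ℤ/2ℤ`
with coordinatewise addition modulo 2, Tychonoff topology. -/
abbrev DyadicGroup : Type := ℕ → ZMod 2

instance : MeasurableSpace DyadicGroup := borel _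
instance : BorelSpace DyadicGroup := ⟨rfl⟩

/-- `𝔾^d`. -/
abbrev GD (d : ℕ) : Type := Fin d → DyadicGroup

/-- One-dimensional Walsh function `W_n` in the Paley enumeration:
`W_n(g) = ∏_k (-1)^(g_k n_k)`. -/
def walsh (n : ℕ) (g : DyadicGroup) : ℝ :=
  ∏ k ∈ Finset.range n, if n.testBit k ∧ g k = 1 then (-1 : ℝ) else 1

/-- `d`-dimensional Walsh function `W_𝐧(𝐠) = ∏ W_{n^l}(g^l)`. -/
def walshD {d : ℕ} (n : Fin d → ℕ) (g : GD d) : ℝ :=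
  ∏ l, walsh (n l) (g l)

/-- The dyadic interval `Δ^{(k)}_m` of rank `k`. -/
def dyadicInterval (k m : ℕ) : Set DyadicGroup :=
  {g | ∀ t < k, g t = if m.testBit (k - 1 - t) then 1 else 0}

/-- The dyadic cube `Δ^{(k)}_𝐦 = Δ^{(k)}_{m^1} × ⋯ × Δ^{(k)}_{m^d}`. -/
def dyadicCube {d : ℕ} (k : ℕ) (m : Fin d → ℕ) : Set (GD d) :=
  {g | ∀ l, g l ∈ dyadicInterval k (m l)}

/-- The canonical point of `Δ^{(k)}_m`. -/
def intervalPoint (k m : ℕ) : DyadicGroup :=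
  fun t => if t < k ∧ m.testBit (k - 1 - t) then 1 else 0

/-- The canonical point of `Δ^{(k)}_𝐦`. -/
def cubePoint {d : ℕ} (k : ℕ) (m : Fin d → ℕ) : GD d :=
  fun l => intervalPoint k (m l)

/-- `W^{(k)}_{n,m}`: the (constant, for `n < 2^k`) value of `W_n` on `Δ^{(k)}_m`. -/
def walshVal (k n m : ℕ) : ℝ := walsh n (intervalPoint k m)

/-- `W^{(k)}_{𝐧𝐦}`: the (constant, for `𝐧 < 2^k·𝟏`) value of `W_𝐧` on `Δ^{(k)}_𝐦`. -/
def walshValD {d : ℕ} (k : ℕ) (n m : Fin d → ℕ) : ℝ := walshD n (cubePoint k m)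

/-- The box `{𝐧 : 𝐧 < 𝐍}` as a finset. -/
def boxLt {d : ℕ} (N : Fin d → ℕ) : Finset (Fin d → ℕ) :=
  Fintype.piFinset fun l => Finset.range (N l)

/-- The box `{0,…,2^k−1}^d` as a set. -/
def box (d k : ℕ) : Set (Fin d → ℕ) := {m | ∀ l, m l < 2 ^ k}

/-- The rectangular partial sum `S_𝐍(𝐠)` of the Walsh series with coefficients `a`. -/
def walshPartialSum {d : ℕ} (a : (Fin d → ℕ) → ℂ) (N : Fin d → ℕ) (g : GD d) : ℂ :=
  ∑ n ∈ boxLt N, a n * (walshD n g : ℂ)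

/-- Convergence over rectangles: `S_𝐍(𝐠) → S` as `min_j N^j → ∞`. -/
def ConvergesOverRectangles {d : ℕ} (a : (Fin d → ℕ) → ℂ) (g : GD d) (S : ℂ) : Prop :=
  Tendsto (fun N : Fin d → ℕ => walshPartialSum a N g) atTop (𝓝 S)

/-- Convergence over cubes: `S_{N𝟏}(𝐠) → S` as `N → ∞`. -/
def ConvergesOverCubes {d : ℕ} (a : (Fin d → ℕ) → ℂ) (g : GD d) (S : ℂ) : Prop :=
  Tendsto (fun N : ℕ => walshPartialSum a (fun _ => N) g) atTop (𝓝 S)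

/-- `λ`-convergence: `S_𝐍(𝐠) → S` as `min_j N^j → ∞` along `𝐍` with `max N^j/N^k ≤ λ`. -/
def LambdaConverges {d : ℕ} (lam : ℝ) (a : (Fin d → ℕ) → ℂ) (g : GD d) (S : ℂ) : Prop :=
  ∀ ε : ℝ, 0 < ε → ∃ K : ℕ, ∀ N : Fin d → ℕ, (∀ j, K ≤ N j) →
    (∀ j k, (N j : ℝ) ≤ lam * N k) → ‖walshPartialSum a N g - S‖ < ε

/-- Auxiliary predicate for iterated summation of a multiple series with terms `f`;
the list gives the order of summation, *innermost index first*.  After summing the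
series in the variables of the list, the remaining (partially summed) function is `g`. -/
def IterConvAux {d : ℕ} : List (Fin d) → ((Fin d → ℕ) → ℂ) → ((Fin d → ℕ) → ℂ) → Prop
  | [], f, g => f = g
  | j :: rest, f, g => ∃ h : (Fin d → ℕ) → ℂ,
      (∀ n, Tendsto (fun T : ℕ => ∑ t ∈ Finset.range T, f (Function.update n j t))
        atTop (𝓝 (h n))) ∧ IterConvAux rest h g

/-- The multiple series with terms `f` converges iteratedly to `S`, the order of
summation being given by the list `l` (innermost index first): all successively
nested inner series converge and the full iterated sum equals `S`. -/
def IterConverges {d : ℕ} (l : List (Fin d)) (f : (Fin d → ℕ) → ℂ) (S : ℂ) : Prop :=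
  ∃ g, IterConvAux l f g ∧ ∀ n, g n = S

/-- `A` is an M-set for the `d`-dimensional Walsh system under rectangular convergence. -/
def IsMSetRect {d : ℕ} (A : Set (GD d)) : Prop :=
  ∃ a : (Fin d → ℕ) → ℂ, (∃ n, a n ≠ 0) ∧ ∀ g ∉ A, ConvergesOverRectangles a g 0

/-- `A` is an M-set for the `d`-dimensional Walsh system under convergence over cubes. -/
def IsMSetCubes {d : ℕ} (A : Set (GD d)) : Prop :=
  ∃ a : (Fin d → ℕ) → ℂ, (∃ n, a n ≠ 0) ∧ ∀ g ∉ A, ConvergesOverCubes a g 0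

/-- `A` is an M-set under iterated convergence with summation order `l` (innermost first). -/
def IsMSetIter {d : ℕ} (A : Set (GD d)) (l : List (Fin d)) : Prop :=
  ∃ a : (Fin d → ℕ) → ℂ, (∃ n, a n ≠ 0) ∧
    ∀ g ∉ A, IterConverges l (fun n => a n * (walshD n g : ℂ)) 0

/-- `A` is an M-set for the `d`-dimensional Walsh system under `λ`-convergence. -/
def IsMSetLambda {d : ℕ} (lam : ℝ) (A : Set (GD d)) : Prop :=
  ∃ a : (Fin d → ℕ) → ℂ, (∃ n, a n ≠ 0) ∧ ∀ g ∉ A, LambdaConverges lam a g 0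

/-- A quasimeasure: a finitely additive function on dyadic cubes (indexed by rank
`k` and position `𝐦 < 2^k·𝟏`). -/
def IsQuasimeasure {d : ℕ} (τ : ℕ → (Fin d → ℕ) → ℂ) : Prop :=
  ∀ k m, (∀ l, m l < 2 ^ k) →
    τ k m = ∑ σ : Fin d → Fin 2, τ (k + 1) fun l => 2 * m l + (σ l : ℕ)

/-- The quasimeasure generated by the Walsh series with coefficients `a`:
`τ(Δ^{(k)}_𝐦) = 2^{-kd} ∑_{𝐧<2^k𝟏} a_𝐧 W_𝐧(Δ^{(k)}_𝐦)`. -/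
def genQM {d : ℕ} (a : (Fin d → ℕ) → ℂ) (k : ℕ) (m : Fin d → ℕ) : ℂ :=
  ((2 : ℂ) ^ (k * d))⁻¹ * ∑ n ∈ boxLt (fun _ : Fin d => 2 ^ k), a n * (walshValD k n m : ℂ)

/-- The Fourier–Walsh coefficient `τ̂_𝐧` of a quasimeasure `τ`, computed at resolution `k`
(the value does not depend on `k` as long as `𝐧 < 2^k𝟏`). -/
def fourierCoeffAt {d : ℕ} (τ : ℕ → (Fin d → ℕ) → ℂ) (n : Fin d → ℕ) (k : ℕ) : ℂ :=
  ∑ m ∈ boxLt (fun _ : Fin d => 2 ^ k), (walshValD k n m : ℂ) * τ k m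

/-- The local Fourier–Walsh coefficient `τ̂_𝐧(Δ^{(r)}_{𝐦Δ})`, computed at resolution `k ≥ r`. -/
def localCoeffAt {d : ℕ} (τ : ℕ → (Fin d → ℕ) → ℂ) (n : Fin d → ℕ)
    (r : ℕ) (mΔ : Fin d → ℕ) (k : ℕ) : ℂ :=
  ∑ m ∈ (boxLt (fun _ : Fin d => 2 ^ k)).filter
      (fun m => dyadicCube k m ⊆ dyadicCube r mΔ),
    (walshValD k n m : ℂ) * τ k m

/-- The support of a quasimeasure: the complement of the union of all dyadic cubes `Δ₀`
such that `τ(Δ) = 0` for every dyadic cube `Δ ⊆ Δ₀`. -/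
def qmSupport {d : ℕ} (τ : ℕ → (Fin d → ℕ) → ℂ) : Set (GD d) :=
  (⋃ k, ⋃ m ∈ box d k,
    ⋃ (_ : ∀ k' m', (∀ l, m' l < 2 ^ k') →
        dyadicCube k' m' ⊆ dyadicCube k m → τ k' m' = 0),
    dyadicCube k m)ᶜ

/-- The restriction `τ|_{Δ̃}` of a quasimeasure to the dyadic cube `Δ̃ = Δ^{(r)}_{𝐦Δ}`:
`τ|_{Δ̃}(Δ) = τ(Δ̃ ∩ Δ)` (two dyadic cubes are nested or disjoint). -/
def restrictQM {d : ℕ} (τ : ℕ → (Fin d → ℕ) → ℂ) (r : ℕ) (mΔ : Fin d → ℕ) :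
    ℕ → (Fin d → ℕ) → ℂ := fun k m =>
  if dyadicCube k m ⊆ dyadicCube (d := d) r mΔ then τ k m
  else if dyadicCube (d := d) r mΔ ⊆ dyadicCube k m then τ r mΔ
  else 0

/-- `τ` is the canonical quasimeasure `τ_E` associated with a (nonempty closed) set `E`:
`τ(𝔾^d) = 1`; `τ(Δ) = 0` iff `Δ ∩ E = ∅`; and the mass of a cube meeting `E` is divided
equally among its `2^d` immediate subcubes that meet `E`. -/
def IsTauOf {d : ℕ} (E : Set (GD d)) (τ : ℕ → (Fin d → ℕ) → ℂ) : Prop :=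
  IsQuasimeasure τ ∧
  τ 0 (fun _ => 0) = 1 ∧
  (∀ k m, (∀ l, m l < 2 ^ k) → (τ k m = 0 ↔ dyadicCube k m ∩ E = ∅)) ∧
  (∀ k m, (∀ l, m l < 2 ^ k) → (dyadicCube k m ∩ E).Nonempty →
    ∀ σ : Fin d → Fin 2,
      τ (k + 1) (fun l => 2 * m l + (σ l : ℕ)) =
        if (dyadicCube (k + 1) (fun l => 2 * m l + (σ l : ℕ)) ∩ E).Nonempty then
          τ k m / ((Finset.univ.filter fun σ' : Fin d → Fin 2 =>
              (dyadicCube (k + 1) (fun l => 2 * m l + (σ' l : ℕ)) ∩ E).Nonempty).card : ℂ)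
        else 0)

/-- The sequence `m_s`: `m_1 = 0`, `m_{s+1} = 2(2m_s+1)` (value at `0` is junk). -/
def mSeq : ℕ → ℕ
  | 0 => 0
  | s + 1 => if s = 0 then 0 else 2 * (2 * mSeq s + 1)

/-- The layer `F_s^π`. -/
def Fspi {d : ℕ} (π : ℕ → (Fin d → ℕ) → Fin d → ℕ) (s : ℕ) : Set (GD d) :=
  ⋃ m ∈ box d (mSeq s), ⋃ m' ∈ box d (mSeq s),
    {g | g ∈ dyadicCube (2 * mSeq s) (fun l => 2 ^ mSeq s * m l + m' l) ∧
      walshD (fun _ => 2 ^ (2 * mSeq s)) g = walshValD (mSeq s) (π s m) m'}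

/-- `F̃_s^π = F_1^π ∩ ⋯ ∩ F_s^π` (so `F̃_0^π = 𝔾^d`). -/
def Ftil {d : ℕ} (π : ℕ → (Fin d → ℕ) → Fin d → ℕ) (s : ℕ) : Set (GD d) :=
  ⋂ k ∈ Finset.Icc 1 s, Fspi π k

/-- `F^π = ⋂_{s≥1} F_s^π`. -/
def Fpi {d : ℕ} (π : ℕ → (Fin d → ℕ) → Fin d → ℕ) : Set (GD d) :=
  ⋂ s ∈ Set.Ici 1, Fspi π s

/-- The identity element of `S` (yielding `F_s`, `F̃_s` and `F` themselves). -/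
def idPerm (d : ℕ) : ℕ → (Fin d → ℕ) → Fin d → ℕ := fun _ m => m

/-- `S`: sequences `π = (π_s)` of permutations of the boxes `{0,…,2^{m_s}−1}^d`. -/
structure PermSeq (d : ℕ) where
  p : ℕ → Equiv.Perm (Fin d → ℕ)
  maps : ∀ s, Set.MapsTo (p s) (box d (mSeq s)) (box d (mSeq s))

/-- The underlying sequence of functions of an element of `S`. -/
def PermSeq.f {d : ℕ} (π : PermSeq d) : ℕ → (Fin d → ℕ) → Fin d → ℕ := fun s => ⇑(π.p s)

/-- `π ∈ S'`: every `π_s` acts coordinatewise, `π_s(𝐦) = (π_s^1(m^1),…,π_s^d(m^d))`. -/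
def PermSeq.Coordinatewise {d : ℕ} (π : PermSeq d) : Prop :=
  ∀ s, ∃ e : Fin d → ℕ → ℕ, ∀ m : Fin d → ℕ, π.p s m = fun l => e l (m l)

/-- The Dirichlet kernel `D_N = ∑_{n<N} W_n` of the one-dimensional Walsh system. -/
def dirichlet (N : ℕ) (g : DyadicGroup) : ℝ :=
  ∑ n ∈ Finset.range N, walsh n g

/-!
Let `e` be the point with a single `1`, at coordinate `2 m_s` of the first factor. Translation
by `e` fixes every dyadic cube of rank `2 m_s` and changes the sign of `W_{2^{2m_s}𝟏}`, which only
takes the values `±1`; hence it exchanges `F_s^π` with its complement. Since `F_k^π` only depends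
on the coordinates up to `2 m_k` and `m_k < m_s` for `1 ≤ k < s`, the translation fixes
`F̃_{s-1}^π`. By translation invariance of `μ`, `F_s^π` thus cuts `F̃_{s-1}^π` into two halves of
equal measure, and `μ(F̃_s^π) = 2^{-s}`.
-/

lemma zmod_two_eq_zero_or_eq_one (x : ZMod 2) : x = 0 ∨ x = 1 := by
  revert x
  decide

lemma walsh_two_pow (K : ℕ) (x : DyadicGroup) :
    walsh (2 ^ K) x = if x K = 1 then -1 else 1 := by
  rw [walsh, Finset.prod_eq_single_of_mem K (Finset.mem_range.mpr K.lt_two_pow_self)]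
  · simp [Nat.testBit_two_pow_self]
  · intro k _ hk
    simp [Nat.testBit_two_pow_of_ne (Ne.symm hk)]

lemma walsh_eq_one_or_eq_neg_one (n : ℕ) (x : DyadicGroup) :
    walsh n x = 1 ∨ walsh n x = -1 := by
  refine Finset.prod_induction _ (fun a : ℝ => a = 1 ∨ a = -1) ?_ (Or.inl rfl) ?_
  · rintro a b (rfl | rfl) (rfl | rfl) <;> norm_num
  · intro k _
    split_ifs <;> simp

lemma walshD_eq_one_or_eq_neg_one {d : ℕ} (n : Fin d → ℕ) (g : GD d) :
    walshD n g = 1 ∨ walshD n g = -1 := by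
  refine Finset.prod_induction _ (fun a : ℝ => a = 1 ∨ a = -1) ?_ (Or.inl rfl) ?_
  · rintro a b (rfl | rfl) (rfl | rfl) <;> norm_num
  · exact fun l _ => walsh_eq_one_or_eq_neg_one _ _

lemma walshD_const_two_pow {d : ℕ} (K : ℕ) (g : GD d) :
    walshD (fun _ => 2 ^ K) g = ∏ l, if g l K = 1 then -1 else 1 :=
  Finset.prod_congr rfl fun l _ => walsh_two_pow K (g l)

def flipAt {d : ℕ} (l : Fin d) (K : ℕ) : GD d := Pi.single l (Pi.single K 1)

lemma add_flipAt_apply_of_ne {d K t : ℕ} (ht : t ≠ K) (g : GD d) (l l' : Fin d) :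
    (g + flipAt l K) l' t = g l' t := by
  rcases eq_or_ne l' l with rfl | hl
  · simp [flipAt, ht]
  · simp [flipAt, hl]

lemma walshD_const_two_pow_add_flipAt {d : ℕ} (K : ℕ) (g : GD d) (l : Fin d) :
    walshD (fun _ => 2 ^ K) (g + flipAt l K) = -walshD (fun _ => 2 ^ K) g := by
  simp only [walshD_const_two_pow]
  rw [← Finset.mul_prod_erase _ _ (Finset.mem_univ l),
    ← Finset.mul_prod_erase _ (fun l => if g l K = 1 then (-1 : ℝ) else 1) (Finset.mem_univ l)]
  have hrest : ∀ l' ∈ Finset.univ.erase l,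
      (if (g + flipAt l K) l' K = 1 then (-1 : ℝ) else 1) = if g l' K = 1 then -1 else 1 :=
    fun l' hl' => by simp [flipAt, Finset.ne_of_mem_erase hl']
  rw [Finset.prod_congr rfl hrest]
  have hK : (g + flipAt l K) l K = g l K + 1 := by simp [flipAt]
  rw [hK]
  rcases zmod_two_eq_zero_or_eq_one (g l K) with h | h <;> simp [h]

lemma exists_mem_dyadicInterval (k : ℕ) (x : DyadicGroup) :
    ∃ m < 2 ^ k, x ∈ dyadicInterval k m := by
  induction k with
  | zero => exact ⟨0, by norm_num, fun t ht => absurd ht (Nat.not_lt_zero t)⟩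
  | succ k ih =>
    obtain ⟨m, hm, hx⟩ := ih
    have hv := (x k).val_lt
    refine ⟨2 * m + (x k).val, by omega, fun t ht => ?_⟩
    rcases Nat.lt_succ_iff_lt_or_eq.mp ht with ht | rfl
    · rw [show k + 1 - 1 - t = (k - 1 - t) + 1 by omega, Nat.testBit_succ,
        show (2 * m + (x k).val) / 2 = m by omega]
      exact hx t ht
    · rw [show t + 1 - 1 - t = 0 by omega, Nat.testBit_zero]
      rcases zmod_two_eq_zero_or_eq_one (x t) with h | h <;> simp [h, ZMod.val_one]

lemma eq_of_mem_dyadicInterval {k m m' : ℕ} (hm : m < 2 ^ k) (hm' : m' < 2 ^ k)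
    {x : DyadicGroup} (h : x ∈ dyadicInterval k m) (h' : x ∈ dyadicInterval k m') : m = m' := by
  refine Nat.eq_of_testBit_eq fun j => ?_
  by_cases hj : j < k
  · have e := (h (k - 1 - j) (by omega)).symm.trans (h' (k - 1 - j) (by omega))
    rw [show k - 1 - (k - 1 - j) = j by omega] at e
    revert e
    cases m.testBit j <;> cases m'.testBit j <;> decide
  · rw [Nat.testBit_lt_two_pow (hm.trans_le (Nat.pow_le_pow_right two_pos (by omega))),
      Nat.testBit_lt_two_pow (hm'.trans_le (Nat.pow_le_pow_right two_pos (by omega)))]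

lemma mem_dyadicCube_congr {d k : ℕ} {m : Fin d → ℕ} {g g' : GD d}
    (h : ∀ l, ∀ t < k, g l t = g' l t) : g ∈ dyadicCube k m ↔ g' ∈ dyadicCube k m :=
  forall_congr' fun l => forall₂_congr fun t ht => by rw [h l t ht]

lemma exists_mem_dyadicCube_two_mul {d : ℕ} (k : ℕ) (g : GD d) :
    ∃ m ∈ box d k, ∃ m' ∈ box d k, g ∈ dyadicCube (2 * k) (fun l => 2 ^ k * m l + m' l) := by
  choose M hM hg using fun l => exists_mem_dyadicInterval (2 * k) (g l)
  refine ⟨fun l => M l / 2 ^ k, fun l => ?_, fun l => M l % 2 ^ k,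
    fun l => Nat.mod_lt _ (Nat.two_pow_pos k), ?_⟩
  · exact Nat.div_lt_of_lt_mul (by rw [← pow_add, ← two_mul]; exact hM l)
  · simp only [Nat.div_add_mod]
    exact hg

lemma eq_of_mem_dyadicCube_two_mul {d k : ℕ} {m m' n n' : Fin d → ℕ}
    (hm : m ∈ box d k) (hm' : m' ∈ box d k) (hn : n ∈ box d k) (hn' : n' ∈ box d k) {g : GD d}
    (h : g ∈ dyadicCube (2 * k) (fun l => 2 ^ k * m l + m' l))
    (h' : g ∈ dyadicCube (2 * k) (fun l => 2 ^ k * n l + n' l)) : m = n ∧ m' = n' := by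
  have hlt : ∀ {a b : ℕ}, a < 2 ^ k → b < 2 ^ k → 2 ^ k * a + b < 2 ^ (2 * k) := fun ha hb => by
    rw [two_mul, pow_add]
    nlinarith
  have he l := eq_of_mem_dyadicInterval (hlt (hm l) (hm' l)) (hlt (hn l) (hn' l)) (h l) (h' l)
  have hpos := Nat.two_pow_pos k
  refine ⟨funext fun l => ?_, funext fun l => ?_⟩
  · have := congrArg (· / 2 ^ k) (he l)
    simpa [Nat.mul_add_div hpos, Nat.div_eq_of_lt (hm' l), Nat.div_eq_of_lt (hn' l)] using this
  · have := congrArg (· % 2 ^ k) (he l)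
    simpa [Nat.mod_eq_of_lt (hm' l), Nat.mod_eq_of_lt (hn' l)] using this

lemma measurable_coord {d : ℕ} (l : Fin d) (t : ℕ) : Measurable fun g : GD d => g l t :=
  ((continuous_apply t).measurable : Measurable fun x : DyadicGroup => x t).comp
    (measurable_pi_apply l)

lemma measurableSet_coord_eq {d : ℕ} (l : Fin d) (t : ℕ) (v : ZMod 2) :
    MeasurableSet {g : GD d | g l t = v} :=
  measurable_coord l t (measurableSet_singleton v)

lemma measurable_walshD {d : ℕ} (n : Fin d → ℕ) : Measurable (walshD n : GD d → ℝ) :=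
  Finset.measurable_prod _ fun l _ => Finset.measurable_prod _ fun k _ =>
    Measurable.ite (.inter (.const _) (measurableSet_coord_eq l k 1)) measurable_const
      measurable_const

lemma measurableSet_dyadicCube {d : ℕ} (k : ℕ) (m : Fin d → ℕ) :
    MeasurableSet (dyadicCube k m : Set (GD d)) := by
  have : dyadicCube k m = ⋂ (l : Fin d) (t : ℕ) (_ : t < k),
      {g : GD d | g l t = if (m l).testBit (k - 1 - t) then 1 else 0} := by
    ext g
    simp [dyadicCube, dyadicInterval]
  rw [this]
  exact .iInter fun l => .iInter fun t => .iInter fun _ => measurableSet_coord_eq l t _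

lemma mSeq_strictMonoOn : StrictMonoOn mSeq (Set.Ici 1) :=
  strictMonoOn_of_lt_add_one Set.ordConnected_Ici fun s _ hs _ => by
    simp only [mSeq, if_neg (Nat.one_le_iff_ne_zero.mp hs)]
    omega

section Layers

variable {d : ℕ} (π : ℕ → (Fin d → ℕ) → Fin d → ℕ)

lemma measurableSet_Fspi (s : ℕ) : MeasurableSet (Fspi π s) :=
  .biUnion (Set.to_countable _) fun _ _ => .biUnion (Set.to_countable _) fun _ _ =>
    (measurableSet_dyadicCube _ _).inter (measurable_walshD _ (measurableSet_singleton _))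

lemma mem_Fspi_iff (s : ℕ) (g : GD d) :
    g ∈ Fspi π s ↔ ∃ m ∈ box d (mSeq s), ∃ m' ∈ box d (mSeq s),
      g ∈ dyadicCube (2 * mSeq s) (fun l => 2 ^ mSeq s * m l + m' l) ∧
      walshD (fun _ => 2 ^ (2 * mSeq s)) g = walshValD (mSeq s) (π s m) m' := by
  simp only [Fspi, Set.mem_iUnion, Set.mem_ofPred_eq, exists_prop]

lemma mem_Fspi_congr {s : ℕ} {g g' : GD d} (h : ∀ l, ∀ t ≤ 2 * mSeq s, g l t = g' l t) :
    g ∈ Fspi π s ↔ g' ∈ Fspi π s := by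
  have hW : walshD (fun _ => 2 ^ (2 * mSeq s)) g = walshD (fun _ => 2 ^ (2 * mSeq s)) g' := by
    simp only [walshD_const_two_pow, h _ _ le_rfl]
  simp only [mem_Fspi_iff, hW, mem_dyadicCube_congr fun l t ht => h l t ht.le]

lemma mem_Fspi_iff_of_mem_dyadicCube {s : ℕ} {m m' : Fin d → ℕ} (hm : m ∈ box d (mSeq s))
    (hm' : m' ∈ box d (mSeq s)) {g : GD d}
    (hg : g ∈ dyadicCube (2 * mSeq s) (fun l => 2 ^ mSeq s * m l + m' l)) :
    g ∈ Fspi π s ↔ walshD (fun _ => 2 ^ (2 * mSeq s)) g = walshValD (mSeq s) (π s m) m' := by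
  refine ⟨fun hF => ?_, fun hW => (mem_Fspi_iff π s g).mpr ⟨m, hm, m', hm', hg, hW⟩⟩
  obtain ⟨n, hn, n', hn', hgn, hW⟩ := (mem_Fspi_iff π s g).mp hF
  obtain ⟨rfl, rfl⟩ := eq_of_mem_dyadicCube_two_mul hn hn' hm hm' hgn hg
  exact hW

lemma add_flipAt_mem_Fspi_iff (s : ℕ) (g : GD d) (l : Fin d) :
    g + flipAt l (2 * mSeq s) ∈ Fspi π s ↔ g ∉ Fspi π s := by
  obtain ⟨m, hm, m', hm', hg⟩ := exists_mem_dyadicCube_two_mul (mSeq s) g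
  have hg' : g + flipAt l (2 * mSeq s) ∈ dyadicCube (2 * mSeq s) _ :=
    (mem_dyadicCube_congr fun l' t ht => add_flipAt_apply_of_ne ht.ne g l l').mpr hg
  rw [mem_Fspi_iff_of_mem_dyadicCube π hm hm' hg, mem_Fspi_iff_of_mem_dyadicCube π hm hm' hg',
    walshD_const_two_pow_add_flipAt]
  rcases walshD_eq_one_or_eq_neg_one (fun _ => 2 ^ (2 * mSeq s)) g with h | h <;>
    rcases walshD_eq_one_or_eq_neg_one (π s m) (cubePoint (mSeq s) m') with h' | h' <;>
    simp only [walshValD, h, h'] <;> norm_num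

lemma Ftil_zero : Ftil π 0 = Set.univ := by
  simp [Ftil]

lemma Ftil_succ (s : ℕ) : Ftil π (s + 1) = Ftil π s ∩ Fspi π (s + 1) := by
  rw [Ftil, ← Finset.insert_Icc_right_eq_Icc_add_one (by omega), Finset.set_biInter_insert,
    Set.inter_comm, Ftil]

lemma Fpi_subset_Ftil (s : ℕ) : Fpi π ⊆ Ftil π s :=
  Set.biInter_mono (fun _ hk => (Finset.mem_Icc.mp hk).1) fun _ _ => subset_rfl

lemma add_flipAt_mem_Ftil_iff (s : ℕ) (g : GD d) (l : Fin d) :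
    g + flipAt l (2 * mSeq (s + 1)) ∈ Ftil π s ↔ g ∈ Ftil π s := by
  simp only [Ftil, Set.mem_iInter₂]
  refine forall₂_congr fun k hk => mem_Fspi_congr π fun l' t ht => add_flipAt_apply_of_ne ?_ g l l'
  have hk := Finset.mem_Icc.mp hk
  have := mSeq_strictMonoOn (Set.mem_Ici.mpr hk.1) (Set.mem_Ici.mpr (by omega : 1 ≤ s + 1))
    (by omega : k < s + 1)
  omega

end Layers

theorem two_mul_measure_inter_eq_of_add_mem_iff {G : Type*} [AddGroup G] [MeasurableSpace G]
    [MeasurableAdd G] (μ : Measure G) [μ.IsAddRightInvariant] {A B : Set G}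
    (hB : MeasurableSet B) (e : G) (hA : ∀ g, g + e ∈ A ↔ g ∈ A) (hBe : ∀ g, g + e ∈ B ↔ g ∉ B) :
    2 * μ (A ∩ B) = μ A := by
  have hdiff : (· + e) ⁻¹' (A ∩ B) = A \ B := by
    ext g
    simp [hA, hBe]
  rw [two_mul]
  nth_rewrite 2 [← measure_preimage_add_right μ e]
  rw [hdiff, measure_inter_add_sdiff A hB]

/-- `μ(F̃_s^π) = 2^{−s}` for every `π ∈ S` and `s ≥ 1`, hence `μ(F^π) = 0`
(the identity case gives `μ(F̃_s) = 2^{−s}` and `μ(F) = 0`). -/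
theorem statement8 (d : ℕ) (hd : 2 ≤ d)
    (μ : Measure (GD d)) [μ.IsAddHaarMeasure] (hμ : μ Set.univ = 1)
    (π : PermSeq d) :
    (∀ s : ℕ, 1 ≤ s → μ (Ftil π.f s) = (2 : ENNReal)⁻¹ ^ s) ∧
    μ (Fpi π.f) = 0 := by
  have hμFtil (s : ℕ) : μ (Ftil π.f s) = 2⁻¹ ^ s := by
    induction s with
    | zero => rw [Ftil_zero, hμ, pow_zero]
    | succ s ih =>
      have hhalf := two_mul_measure_inter_eq_of_add_mem_iff μ (measurableSet_Fspi π.f (s + 1))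
        (flipAt ⟨0, by omega⟩ (2 * mSeq (s + 1))) (fun g => add_flipAt_mem_Ftil_iff π.f s g _)
        (fun g => add_flipAt_mem_Fspi_iff π.f (s + 1) g _)
      rw [← Ftil_succ, ih] at hhalf
      rw [pow_succ, ← div_eq_mul_inv, ENNReal.eq_div_iff two_ne_zero ENNReal.ofNat_ne_top, hhalf]
  refine ⟨fun s _ => hμFtil s, le_antisymm ?_ bot_le⟩
  have hlim : Tendsto (fun s => (2 : ENNReal)⁻¹ ^ s) atTop (𝓝 0) :=
    ENNReal.tendsto_pow_atTop_nhds_zero_of_lt_one (by norm_num)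
  exact ge_of_tendsto' hlim fun s => (measure_mono (Fpi_subset_Ftil π.f s)).trans_eq (hμFtil s)
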